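/- arXiv:2401.15333 — 10 statements merged into one kernel-verified Lean document; each statement's English description precedes it below -/
import Mathlib

section
/- Let $\mathfrak g$ and $\mathfrak h$ be Lie-Yamaguti algebras and let $(\chi,\omega,\mu,\theta,D,\rho,T)$ be a septuple of maps as in the definition of a non-abelian (2,3)-cocycle datum. Define on $\mathfrak g \oplus \mathfrak h$ the operations $[x+a,y+b]_{\chi} = [x,y]_{\mathfrak g} + \chi(x,y) + \mu(x)b - \mu(y)a + [a,b]_{\mathfrak h}$ and $\{x+a,y+b,z+c\}_{\omega} = \{x,y,z\}_{\mathfrak g} + \omega(x,y,z) + D(x,y)c + \theta(y,z)a - \theta(x,z)b + T(z)(a,b) + \rho(x)(b,c) - \rho(y)(a,c) + \{a,b,c\}_{\mathfrak h}$. If $(\mathfrak g \oplus \mathfrak h, [\cdot,\cdot]_{\chi}, \{\cdot,\cdot,\cdot\}_{\omega})$ is a Lie-Yamaguti algebra, then the mixed binary Jacobi-type identity holds: for all $x,y \in \mathfrak g$, $a \in \mathfrak h$, $\mu([x,y]_{\mathfrak g})a + [\chi(x,y),a]_{\mathfrak h} + D(x,y)a - \mu(x)\mu(y)a - \theta(y,x)a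 + \mu(y)\mu(x)a + \theta(x,y)a = 0$. -/
/-- A Lie-Yamaguti algebra structure on a module `g` over a field `k`. -/
structure LYStruct (k : Type*) (g : Type*) [Field k] [AddCommGroup g] [Module k g] where
  br : g →ₗ[k] g →ₗ[k] g
  tr : g →ₗ[k] g →ₗ[k] g →ₗ[k] g
  br_skew : ∀ x y, br x y + br y x = 0
  tr_skew : ∀ x y z, tr x y z + tr y x z = 0
  ax1 : ∀ x y z, br (br x y) z + br (br y z) x + br (br z x) y
        + tr x y z + tr y z x + tr z x y = 0
  ax2 : ∀ x y z w, tr (br x y) z w + tr (br y z) x w + tr (br z x) y w = 0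
  ax3 : ∀ x y a b, tr x y (br a b) = br (tr x y a) b + br a (tr x y b)
  ax4 : ∀ x y a b c, tr x y (tr a b c) =
        tr (tr x y a) b c + tr a (tr x y b) c + tr a b (tr x y c)

/-- `(V, μ, θ, D)` is a representation of the Lie-Yamaguti algebra `(g, L)`. -/
def IsLYRep {k g V : Type*} [Field k] [AddCommGroup g] [Module k g]
    [AddCommGroup V] [Module k V] (L : LYStruct k g)
    (μ : g →ₗ[k] V →ₗ[k] V) (θ D : g →ₗ[k] g →ₗ[k] V →ₗ[k] V) : Prop :=
  (∀ x₁ x₂ x₃ v, θ (L.br x₁ x₂) x₃ v = θ x₁ x₃ (μ x₂ v) - θ x₂ x₃ (μ x₁ v)) ∧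
  (∀ x₁ x₂ y v, D x₁ x₂ (μ y v) - μ y (D x₁ x₂ v) = μ (L.tr x₁ x₂ y) v) ∧
  (∀ x y₁ y₂ v, θ x (L.br y₁ y₂) v = μ y₁ (θ x y₂ v) - μ y₂ (θ x y₁ v)) ∧
  (∀ x₁ x₂ y₁ y₂ v, D x₁ x₂ (θ y₁ y₂ v) - θ y₁ y₂ (D x₁ x₂ v) =
      θ (L.tr x₁ x₂ y₁) y₂ v + θ y₁ (L.tr x₁ x₂ y₂) v) ∧
  (∀ x y₁ y₂ y₃ v, θ x (L.tr y₁ y₂ y₃) v =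
      θ y₂ y₃ (θ x y₁ v) - θ y₁ y₃ (θ x y₂ v) + D y₁ y₂ (θ x y₃ v)) ∧
  (∀ x₁ x₂ v, D x₁ x₂ v - θ x₂ x₁ v + θ x₁ x₂ v + μ (L.br x₁ x₂) v
      - μ x₁ (μ x₂ v) + μ x₂ (μ x₁ v) = 0)

theorem stmt6
    {k g h : Type*} [Field k]
    [AddCommGroup g] [Module k g] [AddCommGroup h] [Module k h]
    (G : LYStruct k g) (H : LYStruct k h)
    (χ : g →ₗ[k] g →ₗ[k] h) (ω : g →ₗ[k] g →ₗ[k] g →ₗ[k] h)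
    (μ : g →ₗ[k] h →ₗ[k] h) (θ D : g →ₗ[k] g →ₗ[k] h →ₗ[k] h)
    (ρ T : g →ₗ[k] h →ₗ[k] h →ₗ[k] h)
    (M : LYStruct k (g × h))
    (hbr : ∀ (x y : g) (a b : h),
      M.br (x, a) (y, b) = (G.br x y, χ x y + μ x b - μ y a + H.br a b))
    (htr : ∀ (x y z : g) (a b c : h),
      M.tr (x, a) (y, b) (z, c) = (G.tr x y z,
        ω x y z + D x y c + θ y z a - θ x z b
          + T z a b + ρ x b c - ρ y a c + H.tr a b c))
    : ∀ (x y : g) (a : h),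
      μ (G.br x y) a + H.br (χ x y) a + D x y a - μ x (μ y a)
        - θ y x a + μ y (μ x a) + θ x y a = 0 := by
  intro x y a
  have h1 := M.ax1 (x, 0) (y, 0) (0, a)
  simp only [hbr, htr, map_zero, LinearMap.zero_apply, map_add, map_sub, map_neg,
    LinearMap.map_zero, zero_add, add_zero, sub_zero, zero_sub] at h1
  have h2 := congrArg Prod.snd h1
  simp only [Prod.snd_add, Prod.snd_zero] at h2
  abel_nf at h2 ⊢
  exact h2
end

section
/- Let $\mathfrak g$ and $\mathfrak h$ be Lie-Yamaguti algebras with operations $[\cdot,\cdot]_{\chi}$ and $\{\cdot,\cdot,\cdot\}_{\omega}$ defined on $\mathfrak g \oplus \mathfrak h$ from data $(\chi,\omega,\mu,\theta,D,\rho,T)$ by $[x+a,y+b]_{\chi} = [x,y]_{\mathfrak g} + \chi(x,y) + \mu(x)b - \mu(y)a + [a,b]_{\mathfrak h}$ and $\{x+a,y+b,z+c\}_{\omega} = \{x,y,z\}_{\mathfrak g} + \omega(x,y,z) + D(x,y)c + \theta(y,z)a - \theta(x,z)b + T(z)(a,b) + \rho(x)(b,c) - \rho(y)(a,c) + \{a,b,c\}_{\mathfrak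 h}$. If $(\mathfrak g \oplus \mathfrak h, [\cdot,\cdot]_{\chi}, \{\cdot,\cdot,\cdot\}_{\omega})$ is a Lie-Yamaguti algebra, then for all $x,y \in \mathfrak g$ and $a,b \in \mathfrak h$: $D(x,y)[a,b]_{\mathfrak h} = [D(x,y)a, b]_{\mathfrak h} + [a, D(x,y)b]_{\mathfrak h}$ (i.e. each $D(x,y)$ is a derivation of the binary bracket of $\mathfrak h$), and $D(x,y)\{a,b,c\}_{\mathfrak h} = \{D(x,y)a,b,c\}_{\mathfrak h} + \{a,D(x,y)b,c\}_{\mathfrak h} + \{a,b,D(x,y)c\}_{\mathfrak h}$ for all $c \in \mathfrak h$. -/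
theorem stmt7
    {k g h : Type*} [Field k]
    [AddCommGroup g] [Module k g] [AddCommGroup h] [Module k h]
    (G : LYStruct k g) (H : LYStruct k h)
    (χ : g →ₗ[k] g →ₗ[k] h) (ω : g →ₗ[k] g →ₗ[k] g →ₗ[k] h)
    (μ : g →ₗ[k] h →ₗ[k] h) (θ D : g →ₗ[k] g →ₗ[k] h →ₗ[k] h)
    (ρ T : g →ₗ[k] h →ₗ[k] h →ₗ[k] h)
    (M : LYStruct k (g × h))
    (hbr : ∀ (x y : g) (a b : h),
      M.br (x, a) (y, b) = (G.br x y, χ x y + μ x b - μ y a + H.br a b))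
    (htr : ∀ (x y z : g) (a b c : h),
      M.tr (x, a) (y, b) (z, c) = (G.tr x y z,
        ω x y z + D x y c + θ y z a - θ x z b
          + T z a b + ρ x b c - ρ y a c + H.tr a b c))
    : (∀ (x y : g) (a b : h),
        D x y (H.br a b) = H.br (D x y a) b + H.br a (D x y b)) ∧
      (∀ (x y : g) (a b c : h),
        D x y (H.tr a b c) =
          H.tr (D x y a) b c + H.tr a (D x y b) c + H.tr a b (D x y c)) := by
  constructor
  · intro x y a b
    have h3 := M.ax3 (x, 0) (y, 0) (0, a) (0, b)
    simp [hbr, htr, Prod.ext_iff] at h3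
    exact h3
  · intro x y a b c
    have h4 := M.ax4 (x, 0) (y, 0) (0, a) (0, b) (0, c)
    simp [hbr, htr, Prod.ext_iff] at h4
    exact h4
end

section
/- Let $0 \to \mathfrak h \xrightarrow{i} \hat{\mathfrak g} \xrightarrow{p} \mathfrak g \to 0$ be a non-abelian extension of Lie-Yamaguti algebras, and let $s_1, s_2$ be two linear sections of $p$. Let $(\chi_j, \omega_j, \mu_j, \theta_j, D_j, \rho_j, T_j)$ ($j=1,2$) be the induced non-abelian (2,3)-cocycles (defined by $\chi_j(x,y) = [s_j(x),s_j(y)] - s_j([x,y])$, $\omega_j(x,y,z) = \{s_j(x),s_j(y),s_j(z)\} - s_j(\{x,y,z\})$, $\mu_j(x)a = [s_j(x),a]$, $\theta_j(x,y)a = \{a,s_j(x),s_j(y)\}$, $D_j(x,y)a = \{s_j(x),s_j(y),a\}$, $\rho_j(x)(a,b)=\{s_j(x),a,b\}$, $T_j(x)(a,b)=\{a,b,s_j(x)\}$). Define $\varphi:\mathfrak g \to \mathfrak h$ by $\varphi(x) = s_2(x) - s_1(x)$ (which lands in $\mathfrak h = \ker p$). Then the two cocycles are equivalent via $\varphi$;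 in particular $\mu_1(x)a - \mu_2(x)a = [a, \varphi(x)]_{\mathfrak h}$, $\theta_1(x,y)a - \theta_2(x,y)a = \rho_2(x)(a,\varphi(y)) - T_2(y)(a,\varphi(x)) + \{a,\varphi(x),\varphi(y)\}_{\mathfrak h}$, and $D_1(x,y)a - D_2(x,y)a = \rho_2(y)(\varphi(x),a) - \rho_2(x)(\varphi(y),a) + \{\varphi(x),\varphi(y),a\}_{\mathfrak h}$ for all $x,y \in \mathfrak g$, $a \in \mathfrak h$. -/
theorem stmt8
    {k g h gh : Type*} [Field k]
    [AddCommGroup g] [Module k g] [AddCommGroup h] [Module k h]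
    [AddCommGroup gh] [Module k gh]
    (G : LYStruct k g) (H : LYStruct k h) (A : LYStruct k gh)
    (i : h →ₗ[k] gh) (p : gh →ₗ[k] g)
    (hi_br : ∀ a b, i (H.br a b) = A.br (i a) (i b))
    (hi_tr : ∀ a b c, i (H.tr a b c) = A.tr (i a) (i b) (i c))
    (hp_br : ∀ u v, p (A.br u v) = G.br (p u) (p v))
    (hp_tr : ∀ u v w, p (A.tr u v w) = G.tr (p u) (p v) (p w))
    (hinj : Function.Injective i) (hsurj : Function.Surjective p)
    (hexact : LinearMap.range i = LinearMap.ker p)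
    (s₁ s₂ : g →ₗ[k] gh) (hs₁ : ∀ x, p (s₁ x) = x) (hs₂ : ∀ x, p (s₂ x) = x) :
    -- φ(x) = s₂ x - s₁ x lands in 𝔥
    (∀ x, s₂ x - s₁ x ∈ LinearMap.range i) ∧
    -- equivalence of the two induced cocycles via φ (identified inside ĝ):
    -- χ₁ - χ₂ = [φx,φy] + φ[x,y] - μ₂(x)φy + μ₂(y)φx
    (∀ x y,
      (A.br (s₁ x) (s₁ y) - s₁ (G.br x y)) - (A.br (s₂ x) (s₂ y) - s₂ (G.br x y)) =
        A.br (s₂ x - s₁ x) (s₂ y - s₁ y) + (s₂ (G.br x y) - s₁ (G.br x y))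
          - A.br (s₂ x) (s₂ y - s₁ y) + A.br (s₂ y) (s₂ x - s₁ x)) ∧
    -- ω₁ - ω₂ = θ₂(x,z)φy - D₂(x,y)φz + ρ₂(x)(φy,φz) - θ₂(y,z)φx
    --           + T₂(z)(φx,φy) - ρ₂(y)(φx,φz) - {φx,φy,φz} + φ{x,y,z}
    (∀ x y z,
      (A.tr (s₁ x) (s₁ y) (s₁ z) - s₁ (G.tr x y z))
        - (A.tr (s₂ x) (s₂ y) (s₂ z) - s₂ (G.tr x y z)) =
        A.tr (s₂ y - s₁ y) (s₂ x) (s₂ z) - A.tr (s₂ x) (s₂ y) (s₂ z - s₁ z)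
          + A.tr (s₂ x) (s₂ y - s₁ y) (s₂ z - s₁ z)
          - A.tr (s₂ x - s₁ x) (s₂ y) (s₂ z)
          + A.tr (s₂ x - s₁ x) (s₂ y - s₁ y) (s₂ z)
          - A.tr (s₂ y) (s₂ x - s₁ x) (s₂ z - s₁ z)
          - A.tr (s₂ x - s₁ x) (s₂ y - s₁ y) (s₂ z - s₁ z)
          + (s₂ (G.tr x y z) - s₁ (G.tr x y z))) ∧
    -- μ₁(x)a - μ₂(x)a = [a, φ(x)]
    (∀ x a, A.br (s₁ x) (i a) - A.br (s₂ x) (i a) = A.br (i a) (s₂ x - s₁ x)) ∧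
    -- θ₁(x,y)a - θ₂(x,y)a = ρ₂(x)(a,φy) - T₂(y)(a,φx) + {a,φx,φy}
    (∀ x y a,
      A.tr (i a) (s₁ x) (s₁ y) - A.tr (i a) (s₂ x) (s₂ y) =
        A.tr (s₂ x) (i a) (s₂ y - s₁ y) - A.tr (i a) (s₂ x - s₁ x) (s₂ y)
          + A.tr (i a) (s₂ x - s₁ x) (s₂ y - s₁ y)) ∧
    -- D₁(x,y)a - D₂(x,y)a = ρ₂(y)(φx,a) - ρ₂(x)(φy,a) + {φx,φy,a}
    (∀ x y a,
      A.tr (s₁ x) (s₁ y) (i a) - A.tr (s₂ x) (s₂ y) (i a) =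
        A.tr (s₂ y) (s₂ x - s₁ x) (i a) - A.tr (s₂ x) (s₂ y - s₁ y) (i a)
          + A.tr (s₂ x - s₁ x) (s₂ y - s₁ y) (i a)) ∧
    -- ρ₁(x)(a,b) - ρ₂(x)(a,b) = {a,φx,b}
    (∀ x (a b : h),
      A.tr (s₁ x) (i a) (i b) - A.tr (s₂ x) (i a) (i b) =
        A.tr (i a) (s₂ x - s₁ x) (i b)) ∧
    -- T₁(x)(a,b) - T₂(x)(a,b) = {b,a,φx}
    (∀ x (a b : h),
      A.tr (i a) (i b) (s₁ x) - A.tr (i a) (i b) (s₂ x) =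
        A.tr (i b) (i a) (s₂ x - s₁ x)) := by
  have hb : ∀ u v, A.br u v = -A.br v u :=
    fun u v => eq_neg_of_add_eq_zero_left (A.br_skew u v)
  have ht : ∀ u v w, A.tr u v w = -A.tr v u w :=
    fun u v w => eq_neg_of_add_eq_zero_left (A.tr_skew u v w)
  refine ⟨?_, ?_, ?_, ?_, ?_, ?_, ?_, ?_⟩
  · intro x
    rw [hexact, LinearMap.mem_ker, map_sub, hs₁, hs₂, sub_self]
  · intro x y
    simp only [map_sub, LinearMap.sub_apply]
    rw [hb (s₂ y) (s₂ x), hb (s₂ y) (s₁ x)]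
    abel
  · intro x y z
    simp only [map_sub, LinearMap.sub_apply]
    rw [ht (s₂ y) (s₂ x) (s₂ z), ht (s₁ y) (s₂ x) (s₂ z), ht (s₂ y) (s₂ x) (s₁ z),
      ht (s₂ y) (s₁ x) (s₂ z), ht (s₂ y) (s₁ x) (s₁ z)]
    abel
  · intro x a
    simp only [map_sub, LinearMap.sub_apply]
    rw [hb (i a) (s₂ x), hb (i a) (s₁ x)]
    abel
  · intro x y a
    simp only [map_sub, LinearMap.sub_apply]
    rw [ht (s₂ x) (i a) (s₂ y), ht (s₂ x) (i a) (s₁ y)]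
    abel
  · intro x y a
    simp only [map_sub, LinearMap.sub_apply]
    rw [ht (s₂ y) (s₂ x) (i a), ht (s₂ y) (s₁ x) (i a)]
    abel
  · intro x a b
    simp only [map_sub, LinearMap.sub_apply]
    rw [ht (i a) (s₂ x) (i b), ht (i a) (s₁ x) (i b)]
    abel
  · intro x a b
    simp only [map_sub, LinearMap.sub_apply]
    rw [ht (i b) (i a) (s₂ x), ht (i b) (i a) (s₁ x)]
    abel
end

section
/- Let $\mathcal E: 0 \to \mathfrak h \xrightarrow{i} \hat{\mathfrak g} \xrightarrow{p} \mathfrak g \to 0$ be a non-abelian extension of Lie-Yamaguti algebras with section $s$ of $p$, and let $(\chi,\omega,\mu,\theta,D,\rho,T)$ be the induced non-abelian (2,3)-cocycle. Suppose $(\alpha,\beta) \in \mathrm{Aut}(\mathfrak g) \times \mathrm{Aut}(\mathfrak h)$ and there exists $\gamma \in \mathrm{Aut}(\hat{\mathfrak g})$ with $\gamma(\mathfrak h) = \mathfrak h$, $\gamma \circ i = i \circ \beta$, and $p \circ \gamma = \alpha \circ p$. Then the linear map $\varphi: \mathfrak g \to \mathfrak h$ defined by $\varphi(x) = s(\alpha(x))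 - \gamma(s(x))$ is well-defined (takes values in $\ker p = \mathfrak h$) and satisfies $\beta(\theta(x,y)a) - \theta(\alpha(x),\alpha(y))\beta(a) = \{\beta(a), \varphi(x), \varphi(y)\}_{\mathfrak h} - T(\alpha(y))(\beta(a),\varphi(x)) + \rho(\alpha(x))(\beta(a),\varphi(y))$ for all $x,y \in \mathfrak g$, $a \in \mathfrak h$. -/
theorem stmt9
    {k g h gh : Type*} [Field k]
    [AddCommGroup g] [Module k g] [AddCommGroup h] [Module k h]
    [AddCommGroup gh] [Module k gh]
    (G : LYStruct k g) (H : LYStruct k h) (A : LYStruct k gh)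
    (i : h →ₗ[k] gh) (p : gh →ₗ[k] g)
    (hi_br : ∀ a b, i (H.br a b) = A.br (i a) (i b))
    (hi_tr : ∀ a b c, i (H.tr a b c) = A.tr (i a) (i b) (i c))
    (hp_br : ∀ u v, p (A.br u v) = G.br (p u) (p v))
    (hp_tr : ∀ u v w, p (A.tr u v w) = G.tr (p u) (p v) (p w))
    (hinj : Function.Injective i) (hsurj : Function.Surjective p)
    (hexact : LinearMap.range i = LinearMap.ker p)
    (s : g →ₗ[k] gh) (hs : ∀ x, p (s x) = x)
    (α : g →ₗ[k] g) (hα : Function.Bijective α)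
    (hαbr : ∀ x y, α (G.br x y) = G.br (α x) (α y))
    (hαtr : ∀ x y z, α (G.tr x y z) = G.tr (α x) (α y) (α z))
    (β : h →ₗ[k] h) (hβ : Function.Bijective β)
    (hβbr : ∀ a b, β (H.br a b) = H.br (β a) (β b))
    (hβtr : ∀ a b c, β (H.tr a b c) = H.tr (β a) (β b) (β c))
    (γ : gh →ₗ[k] gh) (hγ : Function.Bijective γ)
    (hγbr : ∀ u v, γ (A.br u v) = A.br (γ u) (γ v))
    (hγtr : ∀ u v w, γ (A.tr u v w) = A.tr (γ u) (γ v) (γ w))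
    (hγh : γ '' (LinearMap.range i : Set gh) = (LinearMap.range i : Set gh))
    (hγi : ∀ a, γ (i a) = i (β a))
    (hpγ : ∀ w, p (γ w) = α (p w)) :
    -- φ(x) = s(αx) - γ(s x) is 𝔥-valued
    (∀ x, s (α x) - γ (s x) ∈ LinearMap.range i) ∧
    -- β(θ(x,y)a) - θ(αx,αy)β(a) = {βa,φx,φy} - T(αy)(βa,φx) + ρ(αx)(βa,φy)
    (∀ x y (a : h),
      γ (A.tr (i a) (s x) (s y)) - A.tr (γ (i a)) (s (α x)) (s (α y)) =
        A.tr (γ (i a)) (s (α x) - γ (s x)) (s (α y) - γ (s y))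
          - A.tr (γ (i a)) (s (α x) - γ (s x)) (s (α y))
          + A.tr (s (α x)) (γ (i a)) (s (α y) - γ (s y))) := by
  constructor
  · intro x
    rw [hexact, LinearMap.mem_ker, map_sub, hs, hpγ, hs]
    simp
  · intro x y a
    rw [hγtr]
    set u := γ (i a)
    set P := s (α x)
    set Q := s (α y)
    set P' := γ (s x)
    set Q' := γ (s y)
    have e1 : A.tr P u Q = - A.tr u P Q := eq_neg_of_add_eq_zero_left (A.tr_skew P u Q)
    have e2 : A.tr P u Q' = - A.tr u P Q' := eq_neg_of_add_eq_zero_left (A.tr_skew P u Q')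
    simp only [map_sub, LinearMap.sub_apply, e1, e2]
    abel
end

section
/- Let $\mathcal E: 0 \to \mathfrak h \xrightarrow{i} \hat{\mathfrak g} \xrightarrow{p} \mathfrak g \to 0$ be a non-abelian extension of Lie-Yamaguti algebras with section $s$ and induced cocycle $(\chi,\omega,\mu,\theta,D,\rho,T)$. Let $(\alpha,\beta) \in \mathrm{Aut}(\mathfrak g) \times \mathrm{Aut}(\mathfrak h)$ and suppose $\varphi: \mathfrak g \to \mathfrak h$ is a linear map satisfying the seven extensibility conditions (5.2)-(5.8). Define $\gamma: \hat{\mathfrak g} \to \hat{\mathfrak g}$ on the decomposition $\hat{\mathfrak g} = \mathfrak h \oplus s(\mathfrak g)$ by $\gamma(a + s(x)) = \beta(a) - \varphi(x) + s(\alpha(x))$. Then $\gamma$ is a bijective Lie-Yamaguti algebra automorphism of $\hat{\mathfrak g}$ with $\gamma(\mathfrak h) = \mathfrak h$, $\gamma i = i\beta$, and $p\gamma = \alpha p$. -/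
theorem stmt10
    {k g h gh : Type*} [Field k]
    [AddCommGroup g] [Module k g] [AddCommGroup h] [Module k h]
    [AddCommGroup gh] [Module k gh]
    (G : LYStruct k g) (H : LYStruct k h) (A : LYStruct k gh)
    (i : h →ₗ[k] gh) (p : gh →ₗ[k] g)
    (hi_br : ∀ a b, i (H.br a b) = A.br (i a) (i b))
    (hi_tr : ∀ a b c, i (H.tr a b c) = A.tr (i a) (i b) (i c))
    (hp_br : ∀ u v, p (A.br u v) = G.br (p u) (p v))
    (hp_tr : ∀ u v w, p (A.tr u v w) = G.tr (p u) (p v) (p w))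
    (hinj : Function.Injective i) (hsurj : Function.Surjective p)
    (hexact : LinearMap.range i = LinearMap.ker p)
    (s : g →ₗ[k] gh) (hs : ∀ x, p (s x) = x)
    (t : gh →ₗ[k] h) (ht : ∀ w, i (t w) + s (p w) = w)
    (χh : g → g → h) (ωh : g → g → g → h)
    (μh : g → h → h) (θh Dh : g → g → h → h) (ρh Th : g → h → h → h)
    (hχ : ∀ x y, i (χh x y) = A.br (s x) (s y) - s (G.br x y))
    (hω : ∀ x y z, i (ωh x y z) = A.tr (s x) (s y) (s z) - s (G.tr x y z))
    (hμ : ∀ x a, i (μh x a) = A.br (s x) (i a))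
    (hθ : ∀ x y a, i (θh x y a) = A.tr (i a) (s x) (s y))
    (hD : ∀ x y a, i (Dh x y a) = A.tr (s x) (s y) (i a))
    (hρ : ∀ x a b, i (ρh x a b) = A.tr (s x) (i a) (i b))
    (hT : ∀ x a b, i (Th x a b) = A.tr (i a) (i b) (s x))
    (α : g →ₗ[k] g) (hα : Function.Bijective α)
    (hαbr : ∀ x y, α (G.br x y) = G.br (α x) (α y))
    (hαtr : ∀ x y z, α (G.tr x y z) = G.tr (α x) (α y) (α z))
    (β : h →ₗ[k] h) (hβ : Function.Bijective β)
    (hβbr : ∀ a b, β (H.br a b) = H.br (β a) (β b))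
    (hβtr : ∀ a b c, β (H.tr a b c) = H.tr (β a) (β b) (β c))
    (φ : g →ₗ[k] h)
    -- the seven extensibility conditions (5.2)-(5.8)
    (c1 : ∀ x y z,
      β (ωh x y z) - ωh (α x) (α y) (α z) =
        Th (α z) (φ x) (φ y) - ρh (α y) (φ x) (φ z) - θh (α y) (α z) (φ x)
          + ρh (α x) (φ y) (φ z) + θh (α x) (α z) (φ y) - Dh (α x) (α y) (φ z)
          + φ (G.tr x y z) - H.tr (φ x) (φ y) (φ z))
    (c2 : ∀ x y,
      β (χh x y) - χh (α x) (α y) =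
        H.br (φ x) (φ y) + φ (G.br x y) - μh (α x) (φ y) + μh (α y) (φ x))
    (c3 : ∀ x y a,
      β (θh x y a) - θh (α x) (α y) (β a) =
        H.tr (β a) (φ x) (φ y) - Th (α y) (β a) (φ x) + ρh (α x) (β a) (φ y))
    (c4 : ∀ x y a,
      β (Dh x y a) - Dh (α x) (α y) (β a) =
        H.tr (φ x) (φ y) (β a) - ρh (α x) (φ y) (β a) + ρh (α y) (φ x) (β a))
    (c5 : ∀ x a b,
      β (ρh x a b) - ρh (α x) (β a) (β b) = H.tr (β a) (φ x) (β b))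
    (c6 : ∀ x a b,
      β (Th x a b) - Th (α x) (β a) (β b) = H.tr (β b) (β a) (φ x))
    (c7 : ∀ x a, β (μh x a) - μh (α x) (β a) = H.br (β a) (φ x)) :
    -- γ(a + s x) = β a - φ x + s(α x) is an automorphism of ĝ lifting (α, β)
    Function.Bijective (fun w => i (β (t w)) - i (φ (p w)) + s (α (p w))) ∧
    (∀ u v, i (β (t (A.br u v))) - i (φ (p (A.br u v))) + s (α (p (A.br u v))) =
      A.br (i (β (t u)) - i (φ (p u)) + s (α (p u)))
            (i (β (t v)) - i (φ (p v)) + s (α (p v)))) ∧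
    (∀ u v w,
      i (β (t (A.tr u v w))) - i (φ (p (A.tr u v w))) + s (α (p (A.tr u v w))) =
      A.tr (i (β (t u)) - i (φ (p u)) + s (α (p u)))
            (i (β (t v)) - i (φ (p v)) + s (α (p v)))
            (i (β (t w)) - i (φ (p w)) + s (α (p w)))) ∧
    (∀ a, i (β (t (i a))) - i (φ (p (i a))) + s (α (p (i a))) = i (β a)) ∧
    (∀ w, p (i (β (t w)) - i (φ (p w)) + s (α (p w))) = α (p w)) ∧
    ((fun w => i (β (t w)) - i (φ (p w)) + s (α (p w))) ''
        (LinearMap.range i : Set gh) = (LinearMap.range i : Set gh)) := by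
  -- basic structural facts
  have hpi : ∀ a, p (i a) = 0 := fun a => by
    have : i a ∈ LinearMap.ker p := hexact ▸ LinearMap.mem_range_self i a
    exact this
  have hti : ∀ a, t (i a) = a := fun a => by
    apply hinj
    have h1 := ht (i a)
    rw [hpi, map_zero, add_zero] at h1
    exact h1
  have hts : ∀ x, t (s x) = 0 := fun x => by
    apply hinj
    have h1 := ht (s x)
    rw [hs] at h1
    rw [map_zero]
    exact add_right_cancel (h1.trans (zero_add (s x)).symm)
  -- decomposition of the bracket on atoms
  have e_ii : ∀ a b, A.br (i a) (i b) = i (H.br a b) := fun a b => (hi_br a b).symm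
  have e_si : ∀ x a, A.br (s x) (i a) = i (μh x a) := fun x a => (hμ x a).symm
  have e_is : ∀ a x, A.br (i a) (s x) = - i (μh x a) := fun a x => by
    have h1 := A.br_skew (i a) (s x)
    rw [e_si] at h1
    linear_combination (norm := abel) h1
  have e_ss : ∀ x y, A.br (s x) (s y) = i (χh x y) + s (G.br x y) := fun x y => by
    rw [hχ]; abel
  -- decomposition of the triple bracket on atoms
  have t_iii : ∀ a b c, A.tr (i a) (i b) (i c) = i (H.tr a b c) :=
    fun a b c => (hi_tr a b c).symm
  have t_iis : ∀ a b x, A.tr (i a) (i b) (s x) = i (Th x a b) :=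
    fun a b x => (hT x a b).symm
  have t_iss : ∀ a x y, A.tr (i a) (s x) (s y) = i (θh x y a) :=
    fun a x y => (hθ x y a).symm
  have t_sii : ∀ x a b, A.tr (s x) (i a) (i b) = i (ρh x a b) :=
    fun x a b => (hρ x a b).symm
  have t_ssi : ∀ x y a, A.tr (s x) (s y) (i a) = i (Dh x y a) :=
    fun x y a => (hD x y a).symm
  have t_isi : ∀ a x b, A.tr (i a) (s x) (i b) = - i (ρh x a b) := fun a x b => by
    have h1 := A.tr_skew (s x) (i a) (i b)
    rw [t_sii] at h1
    linear_combination (norm := abel) h1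
  have t_sis : ∀ x a y, A.tr (s x) (i a) (s y) = - i (θh x y a) := fun x a y => by
    have h1 := A.tr_skew (i a) (s x) (s y)
    rw [t_iss] at h1
    linear_combination (norm := abel) h1
  have t_sss : ∀ x y z, A.tr (s x) (s y) (s z) = i (ωh x y z) + s (G.tr x y z) :=
    fun x y z => by rw [hω]; abel
  -- images under i of the seven conditions
  have ihβbr : ∀ a b, i (β (H.br a b)) = i (H.br (β a) (β b)) :=
    fun a b => congrArg i (hβbr a b)
  have ihβtr : ∀ a b c, i (β (H.tr a b c)) = i (H.tr (β a) (β b) (β c)) :=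
    fun a b c => congrArg i (hβtr a b c)
  have ibrskew : ∀ u v, i (H.br u v) + i (H.br v u) = 0 := fun u v => by
    rw [← map_add, H.br_skew, map_zero]
  have itrskew : ∀ u v w, i (H.tr u v w) + i (H.tr v u w) = 0 := fun u v w => by
    rw [← map_add, H.tr_skew, map_zero]
  have iThskew : ∀ x u v, i (Th x u v) + i (Th x v u) = 0 := fun x u v => by
    rw [hT, hT]; exact A.tr_skew (i u) (i v) (s x)
  have ic1 : ∀ x y z, i (β (ωh x y z)) - i (ωh (α x) (α y) (α z)) =
      i (Th (α z) (φ x) (φ y)) - i (ρh (α y) (φ x) (φ z)) - i (θh (α y) (α z) (φ x))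
        + i (ρh (α x) (φ y) (φ z)) + i (θh (α x) (α z) (φ y)) - i (Dh (α x) (α y) (φ z))
        + i (φ (G.tr x y z)) - i (H.tr (φ x) (φ y) (φ z)) := fun x y z => by
    rw [← map_sub, c1 x y z]; simp [map_add, map_sub]
  have ic2 : ∀ x y, i (β (χh x y)) - i (χh (α x) (α y)) =
      i (H.br (φ x) (φ y)) + i (φ (G.br x y)) - i (μh (α x) (φ y)) + i (μh (α y) (φ x)) :=
    fun x y => by rw [← map_sub, c2 x y]; simp [map_add, map_sub]
  have ic3 : ∀ x y a, i (β (θh x y a)) - i (θh (α x) (α y) (β a)) =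
      i (H.tr (β a) (φ x) (φ y)) - i (Th (α y) (β a) (φ x)) + i (ρh (α x) (β a) (φ y)) :=
    fun x y a => by rw [← map_sub, c3 x y a]; simp [map_add, map_sub]
  have ic4 : ∀ x y a, i (β (Dh x y a)) - i (Dh (α x) (α y) (β a)) =
      i (H.tr (φ x) (φ y) (β a)) - i (ρh (α x) (φ y) (β a)) + i (ρh (α y) (φ x) (β a)) :=
    fun x y a => by rw [← map_sub, c4 x y a]; simp [map_add, map_sub]
  have ic5 : ∀ x a b, i (β (ρh x a b)) - i (ρh (α x) (β a) (β b)) =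
      i (H.tr (β a) (φ x) (β b)) :=
    fun x a b => by rw [← map_sub, c5 x a b]
  have ic6 : ∀ x a b, i (β (Th x a b)) - i (Th (α x) (β a) (β b)) =
      i (H.tr (β b) (β a) (φ x)) :=
    fun x a b => by rw [← map_sub, c6 x a b]
  have ic7 : ∀ x a, i (β (μh x a)) - i (μh (α x) (β a)) = i (H.br (β a) (φ x)) :=
    fun x a => by rw [← map_sub, c7 x a]
  -- the fourth claim: γ ∘ i = i ∘ β
  have key4 : ∀ a, i (β (t (i a))) - i (φ (p (i a))) + s (α (p (i a))) = i (β a) := by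
    intro a
    simp [hti, hpi]
  -- the fifth claim
  have key5 : ∀ w, p (i (β (t w)) - i (φ (p w)) + s (α (p w))) = α (p w) := by
    intro w
    simp [hpi, hs, map_add, map_sub]
  -- bijectivity
  have keybij : Function.Bijective
      (fun w => i (β (t w)) - i (φ (p w)) + s (α (p w))) := by
    set eα := LinearEquiv.ofBijective α hα with heα
    set eβ := LinearEquiv.ofBijective β hβ with heβ
    have hαap : ∀ x, eα x = α x := fun x => rfl
    have hβap : ∀ a, eβ a = β a := fun a => rfl
    have hαs : ∀ x, eα.symm (α x) = x := fun x => by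
      rw [← hαap, LinearEquiv.symm_apply_apply]
    have hβs : ∀ a, eβ.symm (β a) = a := fun a => by
      rw [← hβap, LinearEquiv.symm_apply_apply]
    have hαs' : ∀ x, α (eα.symm x) = x := fun x => by
      rw [← hαap, LinearEquiv.apply_symm_apply]
    have hβs' : ∀ a, β (eβ.symm a) = a := fun a => by
      rw [← hβap, LinearEquiv.apply_symm_apply]
    refine Function.bijective_iff_has_inverse.mpr
      ⟨fun w => i (eβ.symm (t w + φ (eα.symm (p w)))) + s (eα.symm (p w)), ?_, ?_⟩
    · intro w
      dsimp only
      have h1 : p (i (β (t w)) - i (φ (p w)) + s (α (p w))) = α (p w) := key5 w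
      have h2 : t (i (β (t w)) - i (φ (p w)) + s (α (p w))) = β (t w) - φ (p w) := by
        simp [map_add, map_sub, hti, hts]
      rw [h1, h2, hαs]
      have h5 : β (t w) - φ (p w) + φ (p w) = β (t w) := by abel
      rw [h5, hβs]
      linear_combination (norm := abel) ht w
    · intro w
      dsimp only
      have h3 : p (i (eβ.symm (t w + φ (eα.symm (p w)))) + s (eα.symm (p w)))
          = eα.symm (p w) := by simp [hpi, hs]
      have h4 : t (i (eβ.symm (t w + φ (eα.symm (p w)))) + s (eα.symm (p w)))
          = eβ.symm (t w + φ (eα.symm (p w))) := by simp [hti, hts]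
      rw [h3, h4, hβs', hαs', map_add]
      linear_combination (norm := abel) ht w
  refine ⟨keybij, ?_, ?_, key4, key5, ?_⟩
  · -- binary bracket
    intro u v
    obtain ⟨a, x, hu⟩ : ∃ a x, u = i a + s x := ⟨t u, p u, (ht u).symm⟩
    obtain ⟨b, y, hv⟩ : ∃ b y, v = i b + s y := ⟨t v, p v, (ht v).symm⟩
    subst hu hv
    simp only [map_add, map_sub, map_neg, LinearMap.add_apply, LinearMap.sub_apply,
      LinearMap.neg_apply, e_ii, e_si, e_is, e_ss, hti, hts, hpi, hs, map_zero,
      add_zero, zero_add, sub_zero, hαbr]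
    linear_combination (norm := abel)
      ihβbr a b - ic7 y a + ic7 x b + ic2 x y + ibrskew (β b) (φ x)
  · -- ternary bracket
    intro u v w
    obtain ⟨a, x, hu⟩ : ∃ a x, u = i a + s x := ⟨t u, p u, (ht u).symm⟩
    obtain ⟨b, y, hv⟩ : ∃ b y, v = i b + s y := ⟨t v, p v, (ht v).symm⟩
    obtain ⟨c, z, hw⟩ : ∃ c z, w = i c + s z := ⟨t w, p w, (ht w).symm⟩
    subst hu hv hw
    simp only [map_add, map_sub, map_neg, LinearMap.add_apply, LinearMap.sub_apply,
      LinearMap.neg_apply, t_iii, t_iis, t_isi, t_iss, t_sii, t_sis, t_ssi, t_sss,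
      hti, hts, hpi, hs, map_zero, add_zero, zero_add, sub_zero, hαtr]
    linear_combination (norm := abel)
      ihβtr a b c + ic6 z a b - ic5 y a c + ic3 y z a + ic5 x b c - ic3 x z b
        + ic4 x y c + ic1 x y z + itrskew (β a) (β b) (φ z)
        + itrskew (β b) (φ x) (β c) - itrskew (φ x) (β b) (φ z)
        + iThskew (α z) (φ x) (β b)
  · -- image of h
    apply subset_antisymm
    · rintro w ⟨u, ⟨a, rfl⟩, rfl⟩
      exact ⟨β a, (key4 a).symm⟩
    · rintro w ⟨a, rfl⟩
      obtain ⟨b, hb⟩ := hβ.2 a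
      exact ⟨i b, ⟨b, rfl⟩, by dsimp only; rw [key4 b, hb]⟩
end

section
/- Let $\mathcal E: 0 \to \mathfrak h \to \hat{\mathfrak g} \xrightarrow{p} \mathfrak g \to 0$ be a non-abelian extension of Lie-Yamaguti algebras with section $s$ and induced cocycle $(\chi,\omega,\mu,\theta,D,\rho,T)$. For $(\alpha,\beta) \in \mathrm{Aut}(\mathfrak g) \times \mathrm{Aut}(\mathfrak h)$ define the twisted data $\chi_{(\alpha,\beta)}(x,y) = \beta\chi(\alpha^{-1}x, \alpha^{-1}y)$, $\omega_{(\alpha,\beta)}(x,y,z) = \beta\omega(\alpha^{-1}x,\alpha^{-1}y,\alpha^{-1}z)$, $\mu_{(\alpha,\beta)}(x)a = \beta\mu(\alpha^{-1}x)\beta^{-1}a$, $\theta_{(\alpha,\beta)}(x,y)a = \beta\theta(\alpha^{-1}x,\alpha^{-1}y)\beta^{-1}a$, $D_{(\alpha,\beta)}(x,y)a = \beta D(\alpha^{-1}x,\alpha^{-1}y)\beta^{-1}a$, $\rho_{(\alpha,\beta)}(x)(a,b) = \beta\rho(\alpha^{-1}x)(\beta^{-1}a,\beta^{-1}b)$,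 $T_{(\alpha,\beta)}(x)(a,b) = \beta T(\alpha^{-1}x)(\beta^{-1}a,\beta^{-1}b)$. Then $(\chi_{(\alpha,\beta)},\omega_{(\alpha,\beta)},\mu_{(\alpha,\beta)},\theta_{(\alpha,\beta)},D_{(\alpha,\beta)},\rho_{(\alpha,\beta)},T_{(\alpha,\beta)})$ is again a non-abelian (2,3)-cocycle; equivalently, the brackets $[x+a,y+b] = [x,y]_{\mathfrak g} + \chi_{(\alpha,\beta)}(x,y) + \mu_{(\alpha,\beta)}(x)b - \mu_{(\alpha,\beta)}(y)a + [a,b]_{\mathfrak h}$ and the corresponding twisted trilinear bracket make $\mathfrak g \oplus \mathfrak h$ a Lie-Yamaguti algebra. -/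
theorem stmt11
    {k g h gh : Type*} [Field k]
    [AddCommGroup g] [Module k g] [AddCommGroup h] [Module k h]
    [AddCommGroup gh] [Module k gh]
    (G : LYStruct k g) (H : LYStruct k h) (A : LYStruct k gh)
    (i : h →ₗ[k] gh) (p : gh →ₗ[k] g)
    (hi_br : ∀ a b, i (H.br a b) = A.br (i a) (i b))
    (hi_tr : ∀ a b c, i (H.tr a b c) = A.tr (i a) (i b) (i c))
    (hp_br : ∀ u v, p (A.br u v) = G.br (p u) (p v))
    (hp_tr : ∀ u v w, p (A.tr u v w) = G.tr (p u) (p v) (p w))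
    (hinj : Function.Injective i) (hsurj : Function.Surjective p)
    (hexact : LinearMap.range i = LinearMap.ker p)
    (s : g →ₗ[k] gh) (hs : ∀ x, p (s x) = x)
    (χh : g → g → h) (ωh : g → g → g → h)
    (μh : g → h → h) (θh Dh : g → g → h → h) (ρh Th : g → h → h → h)
    (hχ : ∀ x y, i (χh x y) = A.br (s x) (s y) - s (G.br x y))
    (hω : ∀ x y z, i (ωh x y z) = A.tr (s x) (s y) (s z) - s (G.tr x y z))
    (hμ : ∀ x a, i (μh x a) = A.br (s x) (i a))
    (hθ : ∀ x y a, i (θh x y a) = A.tr (i a) (s x) (s y))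
    (hD : ∀ x y a, i (Dh x y a) = A.tr (s x) (s y) (i a))
    (hρ : ∀ x a b, i (ρh x a b) = A.tr (s x) (i a) (i b))
    (hT : ∀ x a b, i (Th x a b) = A.tr (i a) (i b) (s x))
    (α : g ≃ₗ[k] g)
    (hαbr : ∀ x y, α (G.br x y) = G.br (α x) (α y))
    (hαtr : ∀ x y z, α (G.tr x y z) = G.tr (α x) (α y) (α z))
    (β : h ≃ₗ[k] h)
    (hβbr : ∀ a b, β (H.br a b) = H.br (β a) (β b))
    (hβtr : ∀ a b c, β (H.tr a b c) = H.tr (β a) (β b) (β c)) :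
    -- the twisted septuple is again a non-abelian (2,3)-cocycle: the twisted
    -- brackets make g ⊕ h into a Lie-Yamaguti algebra
    ∃ M : LYStruct k (g × h),
      (∀ (x y : g) (a b : h),
        M.br (x, a) (y, b) = (G.br x y,
          β (χh (α.symm x) (α.symm y))
            + β (μh (α.symm x) (β.symm b)) - β (μh (α.symm y) (β.symm a))
            + H.br a b)) ∧
      (∀ (x y z : g) (a b c : h),
        M.tr (x, a) (y, b) (z, c) = (G.tr x y z,
          β (ωh (α.symm x) (α.symm y) (α.symm z))
            + β (Dh (α.symm x) (α.symm y) (β.symm c))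
            + β (θh (α.symm y) (α.symm z) (β.symm a))
            - β (θh (α.symm x) (α.symm z) (β.symm b))
            + β (Th (α.symm z) (β.symm a) (β.symm b))
            + β (ρh (α.symm x) (β.symm b) (β.symm c))
            - β (ρh (α.symm y) (β.symm a) (β.symm c))
            + H.tr a b c)) := by
  classical
  have hpi : ∀ a : h, p (i a) = 0 := by
    intro a
    have : i a ∈ LinearMap.ker p := hexact ▸ LinearMap.mem_range_self i a
    exact this
  -- the comparison isomorphism Φ : g × h ≃ gh
  let Φl : g × h →ₗ[k] gh :=
    s ∘ₗ (α.symm.toLinearMap ∘ₗ LinearMap.fst k g h)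
      + i ∘ₗ (β.symm.toLinearMap ∘ₗ LinearMap.snd k g h)
  have hΦlval : ∀ (x : g) (a : h), Φl (x, a) = s (α.symm x) + i (β.symm a) :=
    fun _ _ => rfl
  have hker : ∀ v : g × h, Φl v = 0 → v = 0 := by
    rintro ⟨x, a⟩ hv
    rw [hΦlval] at hv
    have h1 : α.symm x = 0 := by
      have := congrArg p hv
      simpa [hs, hpi] using this
    have hx : x = 0 := by simpa using congrArg α h1
    rw [h1, map_zero, zero_add] at hv
    have h2 : β.symm a = 0 := hinj (by simpa using hv)
    have ha : a = 0 := by simpa using congrArg β h2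
    simp [hx, ha]
  have hinjΦ : Function.Injective Φl := by
    intro v w e
    have := hker (v - w) (by rw [map_sub, e, sub_self])
    exact sub_eq_zero.mp this
  have hsurjΦ : Function.Surjective Φl := by
    intro u
    obtain ⟨a, ha⟩ : u - s (p u) ∈ LinearMap.range i := by
      rw [hexact]; simp [hs]
    refine ⟨(α (p u), β a), ?_⟩
    rw [hΦlval]
    simp only [LinearEquiv.symm_apply_apply]
    rw [ha]; abel
  let Φ : (g × h) ≃ₗ[k] gh := LinearEquiv.ofBijective Φl ⟨hinjΦ, hsurjΦ⟩
  have hΦval : ∀ (x : g) (a : h), Φ (x, a) = s (α.symm x) + i (β.symm a) :=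
    fun _ _ => rfl
  -- transported brackets
  let br2 : (g × h) →ₗ[k] (g × h) →ₗ[k] (g × h) :=
    (A.br.compl₁₂ Φ.toLinearMap Φ.toLinearMap).compr₂ Φ.symm.toLinearMap
  let tr2 : (g × h) →ₗ[k] (g × h) →ₗ[k] (g × h) →ₗ[k] (g × h) :=
    { toFun := fun v =>
        ((A.tr (Φ v)).compl₁₂ Φ.toLinearMap Φ.toLinearMap).compr₂ Φ.symm.toLinearMap
      map_add' := by
        intro v w
        refine LinearMap.ext₂ fun u u' => ?_
        simp only [LinearMap.compr₂_apply, LinearMap.compl₁₂_apply, map_add,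
          LinearMap.add_apply]
      map_smul' := by
        intro c v
        refine LinearMap.ext₂ fun u u' => ?_
        simp only [LinearMap.compr₂_apply, LinearMap.compl₁₂_apply, map_smul,
          LinearMap.smul_apply, RingHom.id_apply] }
  have hbr2 : ∀ v w, br2 v w = Φ.symm (A.br (Φ v) (Φ w)) := fun _ _ => rfl
  have htr2 : ∀ v w u, tr2 v w u = Φ.symm (A.tr (Φ v) (Φ w) (Φ u)) :=
    fun _ _ _ => rfl
  -- symmetry / equivariance helpers
  have br_neg : ∀ u v, A.br u v = - A.br v u := fun u v =>
    eq_neg_of_add_eq_zero_left (A.br_skew u v)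
  have tr_neg : ∀ u v w, A.tr u v w = - A.tr v u w := fun u v w =>
    eq_neg_of_add_eq_zero_left (A.tr_skew u v w)
  have hαsymm_br : ∀ x y, α.symm (G.br x y) = G.br (α.symm x) (α.symm y) := by
    intro x y
    apply α.injective
    rw [hαbr]
    simp
  have hαsymm_tr : ∀ x y z,
      α.symm (G.tr x y z) = G.tr (α.symm x) (α.symm y) (α.symm z) := by
    intro x y z
    apply α.injective
    rw [hαtr]
    simp
  have hβsymm_br : ∀ a b, β.symm (H.br a b) = H.br (β.symm a) (β.symm b) := by
    intro a b
    apply β.injective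
    rw [hβbr]
    simp
  have hβsymm_tr : ∀ a b c,
      β.symm (H.tr a b c) = H.tr (β.symm a) (β.symm b) (β.symm c) := by
    intro a b c
    apply β.injective
    rw [hβtr]
    simp
  -- expansion of the brackets of gh in terms of the cocycle
  have expand_br : ∀ (X Y : g) (A' B' : h),
      A.br (s X + i A') (s Y + i B') =
        s (G.br X Y) + i (χh X Y + μh X B' - μh Y A' + H.br A' B') := by
    intro X Y A' B'
    have e1 : A.br (s X) (s Y) = s (G.br X Y) + i (χh X Y) := by
      rw [hχ]; abel
    have e3 : A.br (i A') (s Y) = - i (μh Y A') := by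
      rw [br_neg, ← hμ]
    simp only [map_add, map_sub, LinearMap.add_apply]
    rw [e1, ← hμ X B', e3, ← hi_br]
    abel
  have expand_tr : ∀ (X Y Z : g) (A' B' C' : h),
      A.tr (s X + i A') (s Y + i B') (s Z + i C') =
        s (G.tr X Y Z) +
          i (ωh X Y Z + Dh X Y C' + θh Y Z A' - θh X Z B'
            + Th Z A' B' + ρh X B' C' - ρh Y A' C' + H.tr A' B' C') := by
    intro X Y Z A' B' C'
    have t1 : A.tr (s X) (s Y) (s Z) = s (G.tr X Y Z) + i (ωh X Y Z) := by
      rw [hω]; abel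
    have t4 : A.tr (s X) (i B') (s Z) = - i (θh X Z B') := by
      rw [tr_neg, ← hθ]
    have t7 : A.tr (i A') (s Y) (i C') = - i (ρh Y A' C') := by
      rw [tr_neg, ← hρ]
    simp only [map_add, map_sub, LinearMap.add_apply]
    rw [t1, ← hD X Y C', ← hθ Y Z A', t4, ← hT Z A' B', ← hρ X B' C', t7,
      ← hi_tr]
    abel
  -- assemble the Lie-Yamaguti structure
  refine ⟨⟨br2, tr2, ?_, ?_, ?_, ?_, ?_, ?_⟩, ?_, ?_⟩
  · intro v w
    rw [hbr2, hbr2, ← map_add, A.br_skew, map_zero]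
  · intro v w u
    rw [htr2, htr2, ← map_add, A.tr_skew, map_zero]
  · intro x y z
    simp only [hbr2, htr2, LinearEquiv.apply_symm_apply, ← map_add]
    rw [A.ax1, map_zero]
  · intro x y z w
    simp only [hbr2, htr2, LinearEquiv.apply_symm_apply, ← map_add]
    rw [A.ax2, map_zero]
  · intro x y a b
    simp only [hbr2, htr2, LinearEquiv.apply_symm_apply, ← map_add]
    exact congrArg Φ.symm (A.ax3 _ _ _ _)
  · intro x y a b c
    simp only [hbr2, htr2, LinearEquiv.apply_symm_apply, ← map_add]
    exact congrArg Φ.symm (A.ax4 _ _ _ _ _)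
  · intro x y a b
    show br2 (x, a) (y, b) = _
    rw [hbr2, LinearEquiv.symm_apply_eq, hΦval, hΦval, hΦval, expand_br,
      hαsymm_br]
    congr 2
    simp only [map_add, map_sub, LinearEquiv.symm_apply_apply, hβsymm_br]
  · intro x y z a b c
    show tr2 (x, a) (y, b) (z, c) = _
    rw [htr2, LinearEquiv.symm_apply_eq, hΦval, hΦval, hΦval, hΦval,
      expand_tr, hαsymm_tr]
    congr 2
    simp only [map_add, map_sub, LinearEquiv.symm_apply_apply, hβsymm_tr]
end

section
/- Let $\mathcal E: 0 \to \mathfrak h \xrightarrow{i} \hat{\mathfrak g} \xrightarrow{p} \mathfrak g \to 0$ be a non-abelian extension of Lie-Yamaguti algebras with section $s$ of $p$, and let $K: \mathrm{Aut}_{\mathfrak h}(\hat{\mathfrak g}) \to \mathrm{Aut}(\mathfrak g) \times \mathrm{Aut}(\mathfrak h)$, $K(\gamma) = (p\gamma s, \gamma|_{\mathfrak h})$. For $\gamma \in \ker K$ (i.e. $p\gamma s = \mathrm{id}_{\mathfrak g}$ and $\gamma|_{\mathfrak h} = \mathrm{id}_{\mathfrak h}$), define $S(\gamma): \mathfrak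 g \to \mathfrak h$ by $S(\gamma)(x) = s(x) - \gamma(s(x))$. Then $S(\gamma)$ takes values in $\mathfrak h$ and $S: \ker K \to (\mathrm{Hom}(\mathfrak g, \mathfrak h), +)$ is an injective group homomorphism, i.e. $S(\gamma_1 \gamma_2) = S(\gamma_1) + S(\gamma_2)$ for all $\gamma_1, \gamma_2 \in \ker K$, and $S(\gamma) = 0$ implies $\gamma = \mathrm{id}_{\hat{\mathfrak g}}$. -/
theorem stmt13
    {k g h gh : Type*} [Field k]
    [AddCommGroup g] [Module k g] [AddCommGroup h] [Module k h]
    [AddCommGroup gh] [Module k gh]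
    (G : LYStruct k g) (H : LYStruct k h) (A : LYStruct k gh)
    (i : h →ₗ[k] gh) (p : gh →ₗ[k] g)
    (hi_br : ∀ a b, i (H.br a b) = A.br (i a) (i b))
    (hi_tr : ∀ a b c, i (H.tr a b c) = A.tr (i a) (i b) (i c))
    (hp_br : ∀ u v, p (A.br u v) = G.br (p u) (p v))
    (hp_tr : ∀ u v w, p (A.tr u v w) = G.tr (p u) (p v) (p w))
    (hinj : Function.Injective i) (hsurj : Function.Surjective p)
    (hexact : LinearMap.range i = LinearMap.ker p)
    (s : g →ₗ[k] gh) (hs : ∀ x, p (s x) = x)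
    (γ γ₁ γ₂ : gh →ₗ[k] gh)
    -- γ, γ₁, γ₂ ∈ ker K : automorphisms restricting to id on 𝔥 with p∘γ∘s = id
    (hγ : Function.Bijective γ)
    (hγbr : ∀ u v, γ (A.br u v) = A.br (γ u) (γ v))
    (hγtr : ∀ u v w, γ (A.tr u v w) = A.tr (γ u) (γ v) (γ w))
    (hγi : ∀ a, γ (i a) = i a) (hγp : ∀ x, p (γ (s x)) = x)
    (hγ₁ : Function.Bijective γ₁)
    (hγ₁br : ∀ u v, γ₁ (A.br u v) = A.br (γ₁ u) (γ₁ v))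
    (hγ₁tr : ∀ u v w, γ₁ (A.tr u v w) = A.tr (γ₁ u) (γ₁ v) (γ₁ w))
    (hγ₁i : ∀ a, γ₁ (i a) = i a) (hγ₁p : ∀ x, p (γ₁ (s x)) = x)
    (hγ₂ : Function.Bijective γ₂)
    (hγ₂br : ∀ u v, γ₂ (A.br u v) = A.br (γ₂ u) (γ₂ v))
    (hγ₂tr : ∀ u v w, γ₂ (A.tr u v w) = A.tr (γ₂ u) (γ₂ v) (γ₂ w))
    (hγ₂i : ∀ a, γ₂ (i a) = i a) (hγ₂p : ∀ x, p (γ₂ (s x)) = x) :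
    -- S(γ)(x) = s x - γ(s x) takes values in 𝔥
    (∀ x, s x - γ (s x) ∈ LinearMap.range i) ∧
    -- S is additive: S(γ₁γ₂) = S(γ₁) + S(γ₂)
    (∀ x, s x - γ₁ (γ₂ (s x)) = (s x - γ₁ (s x)) + (s x - γ₂ (s x))) ∧
    -- S is injective: S(γ) = 0 → γ = id
    ((∀ x, s x - γ (s x) = 0) → ∀ w, γ w = w) := by
  have mem : ∀ (δ : gh →ₗ[k] gh), (∀ x, p (δ (s x)) = x) →
      ∀ x, s x - δ (s x) ∈ LinearMap.range i := by
    intro δ hδ x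
    rw [hexact, LinearMap.mem_ker, map_sub, hs, hδ, sub_self]
  have fix : ∀ (δ : gh →ₗ[k] gh), (∀ a, δ (i a) = i a) →
      ∀ u, u ∈ LinearMap.range i → δ u = u := by
    rintro δ hδ u ⟨a, rfl⟩; exact hδ a
  refine ⟨mem γ hγp, ?_, ?_⟩
  · intro x
    obtain ⟨a, ha⟩ := mem γ₂ hγ₂p x
    have h2 : γ₂ (s x) = s x - i a := by rw [ha]; abel
    rw [h2, map_sub, fix γ₁ hγ₁i (i a) ⟨a, rfl⟩, ha]
    abel
  · intro h0 w
    have hw : w - s (p w) ∈ LinearMap.range i := by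
      rw [hexact, LinearMap.mem_ker, map_sub, hs, sub_self]
    have h1 : γ (s (p w)) = s (p w) := by
      exact (sub_eq_zero.mp (h0 (p w))).symm
    calc γ w = γ (w - s (p w)) + γ (s (p w)) := by rw [← map_add, sub_add_cancel]
      _ = (w - s (p w)) + s (p w) := by rw [fix γ hγi _ hw, h1]
      _ = w := by abel
end

section
/- Let $\mathcal E: 0 \to \mathfrak h \to \hat{\mathfrak g} \xrightarrow{p} \mathfrak g \to 0$ be a non-abelian extension of Lie-Yamaguti algebras with section $s$ and induced cocycle $(\chi,\omega,\mu,\theta,D,\rho,T)$, and let $K(\gamma) = (p\gamma s, \gamma|_{\mathfrak h})$. Suppose $\gamma \in \ker K$ and set $\varphi_\gamma(x) = s(x) - \gamma(s(x)) \in \mathfrak h$. Then $\varphi_\gamma$ is a non-abelian 1-cocycle; in particular for all $x,y,z \in \mathfrak g$: $\mu(x)\varphi_\gamma(y) - \mu(y)\varphi_\gamma(x) = \varphi_\gamma([x,y]_{\mathfrak g}) + [\varphi_\gamma(x), \varphi_\gamma(y)]_{\mathfrak h}$, and $T(z)(\varphi_\gamma(x),\varphi_\gamma(y)) - \rho(y)(\varphi_\gamma(x),\varphi_\gamma(z))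 - \theta(y,z)\varphi_\gamma(x) + \rho(x)(\varphi_\gamma(y),\varphi_\gamma(z)) + \theta(x,z)\varphi_\gamma(y) - D(x,y)\varphi_\gamma(z) = \{\varphi_\gamma(x),\varphi_\gamma(y),\varphi_\gamma(z)\}_{\mathfrak h} - \varphi_\gamma(\{x,y,z\}_{\mathfrak g})$. -/
theorem stmt14
    {k g h gh : Type*} [Field k]
    [AddCommGroup g] [Module k g] [AddCommGroup h] [Module k h]
    [AddCommGroup gh] [Module k gh]
    (G : LYStruct k g) (H : LYStruct k h) (A : LYStruct k gh)
    (i : h →ₗ[k] gh) (p : gh →ₗ[k] g)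
    (hi_br : ∀ a b, i (H.br a b) = A.br (i a) (i b))
    (hi_tr : ∀ a b c, i (H.tr a b c) = A.tr (i a) (i b) (i c))
    (hp_br : ∀ u v, p (A.br u v) = G.br (p u) (p v))
    (hp_tr : ∀ u v w, p (A.tr u v w) = G.tr (p u) (p v) (p w))
    (hinj : Function.Injective i) (hsurj : Function.Surjective p)
    (hexact : LinearMap.range i = LinearMap.ker p)
    (s : g →ₗ[k] gh) (hs : ∀ x, p (s x) = x)
    (γ : gh →ₗ[k] gh)
    (hγ : Function.Bijective γ)
    (hγbr : ∀ u v, γ (A.br u v) = A.br (γ u) (γ v))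
    (hγtr : ∀ u v w, γ (A.tr u v w) = A.tr (γ u) (γ v) (γ w))
    (hγi : ∀ a, γ (i a) = i a) (hγp : ∀ x, p (γ (s x)) = x) :
    -- φ_γ(x) = s x - γ(s x) takes values in 𝔥
    (∀ x, s x - γ (s x) ∈ LinearMap.range i) ∧
    -- μ(x)φy - μ(y)φx = φ([x,y]) + [φx, φy]
    (∀ x y,
      A.br (s x) (s y - γ (s y)) - A.br (s y) (s x - γ (s x)) =
        (s (G.br x y) - γ (s (G.br x y)))
          + A.br (s x - γ (s x)) (s y - γ (s y))) ∧
    -- T(z)(φx,φy) - ρ(y)(φx,φz) - θ(y,z)φx + ρ(x)(φy,φz) + θ(x,z)φy - D(x,y)φz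
    --   = {φx,φy,φz} - φ({x,y,z})
    (∀ x y z,
      A.tr (s x - γ (s x)) (s y - γ (s y)) (s z)
        - A.tr (s y) (s x - γ (s x)) (s z - γ (s z))
        - A.tr (s x - γ (s x)) (s y) (s z)
        + A.tr (s x) (s y - γ (s y)) (s z - γ (s z))
        + A.tr (s y - γ (s y)) (s x) (s z)
        - A.tr (s x) (s y) (s z - γ (s z)) =
      A.tr (s x - γ (s x)) (s y - γ (s y)) (s z - γ (s z))
        - (s (G.tr x y z) - γ (s (G.tr x y z)))) := by

  have γfix : ∀ u : gh, p u = 0 → γ u = u := by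
    intro u hu
    have : u ∈ LinearMap.range i := by rw [hexact]; exact hu
    obtain ⟨a, rfl⟩ := this
    exact hγi a
  have hbskew : ∀ X Y : gh, A.br Y X = -A.br X Y := fun X Y =>
    eq_neg_of_add_eq_zero_left (A.br_skew Y X)
  have htskew : ∀ X Y Z : gh, A.tr Y X Z = -A.tr X Y Z := fun X Y Z =>
    eq_neg_of_add_eq_zero_left (A.tr_skew Y X Z)
  refine ⟨?_, ?_, ?_⟩
  · intro x
    rw [hexact]
    simp [LinearMap.mem_ker, hs, hγp]
  · intro x y
    have h0 : p (s (G.br x y) - A.br (s x) (s y)) = 0 := by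
      simp [map_sub, hp_br, hs]
    have hb : γ (s (G.br x y)) =
        s (G.br x y) - A.br (s x) (s y) + A.br (γ (s x)) (γ (s y)) := by
      calc γ (s (G.br x y))
          = γ (s (G.br x y) - A.br (s x) (s y)) + γ (A.br (s x) (s y)) := by
            rw [← map_add, sub_add_cancel]
        _ = s (G.br x y) - A.br (s x) (s y) + A.br (γ (s x)) (γ (s y)) := by
            rw [γfix _ h0, hγbr]
    rw [hb]
    simp only [map_sub, LinearMap.sub_apply]
    rw [hbskew (s x) (s y), hbskew (γ (s x)) (s y)]
    abel
  · intro x y z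
    have h0 : p (s (G.tr x y z) - A.tr (s x) (s y) (s z)) = 0 := by
      simp [map_sub, hp_tr, hs]
    have hb : γ (s (G.tr x y z)) =
        s (G.tr x y z) - A.tr (s x) (s y) (s z)
          + A.tr (γ (s x)) (γ (s y)) (γ (s z)) := by
      calc γ (s (G.tr x y z))
          = γ (s (G.tr x y z) - A.tr (s x) (s y) (s z))
              + γ (A.tr (s x) (s y) (s z)) := by
            rw [← map_add, sub_add_cancel]
        _ = _ := by rw [γfix _ h0, hγtr]
    rw [hb]
    simp only [map_sub, LinearMap.sub_apply]
    rw [htskew (s x) (s y) (s z), htskew (s x) (s y) (γ (s z)),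
        htskew (γ (s x)) (s y) (s z), htskew (γ (s x)) (s y) (γ (s z)),
        htskew (s x) (γ (s y)) (s z)]
    abel
end

section
/- Let $\mathcal E: 0 \to \mathfrak h \to \hat{\mathfrak g} \xrightarrow{p} \mathfrak g \to 0$ be an abelian extension of Lie-Yamaguti algebras (i.e. $\mathfrak h = \ker p$ is an abelian ideal of $\hat{\mathfrak g}$: $[\mathfrak h,\mathfrak h]=0$ and $\{\mathfrak h,\mathfrak h,\hat{\mathfrak g}\} = \{\hat{\mathfrak g},\mathfrak h,\mathfrak h\} = \{\mathfrak h,\hat{\mathfrak g},\mathfrak h\}=0$) with section $s$ of $p$. Define $\mu(x)a = [s(x),a]$, $\theta(x,y)a = \{a,s(x),s(y)\}$, $D(x,y)a = \{s(x),s(y),a\}$ for $x,y \in \mathfrak g$, $a \in \mathfrak h$. Then these maps are well-defined (independent of the choice of section $s$, and valued in $\mathfrak h$), and $(\mathfrak h, \mu, \theta, D)$ is a representation of the Lie-Yamaguti algebra $\mathfrak g$. -/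
theorem stmt15
    {k g h gh : Type*} [Field k]
    [AddCommGroup g] [Module k g] [AddCommGroup h] [Module k h]
    [AddCommGroup gh] [Module k gh]
    (G : LYStruct k g) (H : LYStruct k h) (A : LYStruct k gh)
    (i : h →ₗ[k] gh) (p : gh →ₗ[k] g)
    (hi_br : ∀ a b, i (H.br a b) = A.br (i a) (i b))
    (hi_tr : ∀ a b c, i (H.tr a b c) = A.tr (i a) (i b) (i c))
    (hp_br : ∀ u v, p (A.br u v) = G.br (p u) (p v))
    (hp_tr : ∀ u v w, p (A.tr u v w) = G.tr (p u) (p v) (p w))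
    (hinj : Function.Injective i) (hsurj : Function.Surjective p)
    (hexact : LinearMap.range i = LinearMap.ker p)
    -- 𝔥 is an abelian ideal of ĝ
    (hab_br : ∀ a b, A.br (i a) (i b) = 0)
    (hab_tr1 : ∀ (a b : h) (w : gh), A.tr (i a) (i b) w = 0)
    (hab_tr2 : ∀ (a b : h) (w : gh), A.tr w (i a) (i b) = 0)
    (hab_tr3 : ∀ (a b : h) (w : gh), A.tr (i a) w (i b) = 0)
    (s : g →ₗ[k] gh) (hs : ∀ x, p (s x) = x)
    (μh : g →ₗ[k] h →ₗ[k] h) (θh Dh : g →ₗ[k] g →ₗ[k] h →ₗ[k] h)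
    (hμ : ∀ x a, i (μh x a) = A.br (s x) (i a))
    (hθ : ∀ x y a, i (θh x y a) = A.tr (i a) (s x) (s y))
    (hD : ∀ x y a, i (Dh x y a) = A.tr (s x) (s y) (i a))
    :
    -- the structure maps are valued in 𝔥
    (∀ x a, A.br (s x) (i a) ∈ LinearMap.range i) ∧
    (∀ x y a, A.tr (i a) (s x) (s y) ∈ LinearMap.range i) ∧
    (∀ x y a, A.tr (s x) (s y) (i a) ∈ LinearMap.range i) ∧
    -- independence of the choice of section
    (∀ s' : g →ₗ[k] gh, (∀ x, p (s' x) = x) →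
      (∀ x a, A.br (s' x) (i a) = A.br (s x) (i a)) ∧
      (∀ x y a, A.tr (i a) (s' x) (s' y) = A.tr (i a) (s x) (s y)) ∧
      (∀ x y a, A.tr (s' x) (s' y) (i a) = A.tr (s x) (s y) (i a))) ∧
    -- (𝔥, μ, θ, D) is a representation of g
    IsLYRep G μh θh Dh := by

  have hpi : ∀ a : h, p (i a) = 0 := by
    intro a
    have : i a ∈ LinearMap.ker p := hexact ▸ LinearMap.mem_range_self i a
    exact this
  have hmem : ∀ z : gh, p z = 0 → z ∈ LinearMap.range i := by
    intro z hz; rw [hexact]; exact hz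
  have brsk : ∀ u v : gh, A.br u v = -A.br v u := fun u v =>
    eq_neg_of_add_eq_zero_left (A.br_skew u v)
  have trsk : ∀ u v w : gh, A.tr u v w = -A.tr v u w := fun u v w =>
    eq_neg_of_add_eq_zero_left (A.tr_skew u v w)
  have hsbr : ∀ x y : g, ∃ c, s (G.br x y) = A.br (s x) (s y) + i c := by
    intro x y
    have hm : s (G.br x y) - A.br (s x) (s y) ∈ LinearMap.range i := by
      apply hmem; simp [map_sub, hp_br, hs]
    obtain ⟨c, hc⟩ := hm
    exact ⟨c, by rw [hc]; abel⟩
  have hstr : ∀ x y z : g, ∃ c, s (G.tr x y z) = A.tr (s x) (s y) (s z) + i c := by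
    intro x y z
    have hm : s (G.tr x y z) - A.tr (s x) (s y) (s z) ∈ LinearMap.range i := by
      apply hmem; simp [map_sub, hp_tr, hs]
    obtain ⟨c, hc⟩ := hm
    exact ⟨c, by rw [hc]; abel⟩
  refine ⟨?_, ?_, ?_, ?_, ?_, ?_, ?_, ?_, ?_, ?_⟩
  · intro x a
    apply hmem
    simp [hp_br, hs, hpi]
  · intro x y a
    apply hmem
    simp [hp_tr, hs, hpi]
  · intro x y a
    apply hmem
    simp [hp_tr, hs, hpi]
  · intro s' hs'
    have key : ∀ x, ∃ c, s' x = s x + i c := by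
      intro x
      have hm : s' x - s x ∈ LinearMap.range i := by
        apply hmem; simp [map_sub, hs, hs']
      obtain ⟨c, hc⟩ := hm
      exact ⟨c, by rw [hc]; abel⟩
    refine ⟨?_, ?_, ?_⟩
    · intro x a
      obtain ⟨c, hc⟩ := key x
      rw [hc]
      simp [map_add, LinearMap.add_apply, hab_br]
    · intro x y a
      obtain ⟨c, hc⟩ := key x
      obtain ⟨d, hd⟩ := key y
      rw [hc, hd]
      simp [map_add, LinearMap.add_apply, hab_tr1, hab_tr3]
    · intro x y a
      obtain ⟨c, hc⟩ := key x
      obtain ⟨d, hd⟩ := key y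
      rw [hc, hd]
      simp [map_add, LinearMap.add_apply, hab_tr1, hab_tr2, hab_tr3]
  -- rep identity 1
  · intro x₁ x₂ x₃ v
    apply hinj
    simp only [map_sub, map_add, hμ, hθ, hD]
    obtain ⟨c, hc⟩ := hsbr x₁ x₂
    rw [hc]
    simp only [map_add, LinearMap.add_apply, hab_tr1, add_zero]
    have key := A.ax2 (s x₁) (s x₂) (i v) (s x₃)
    rw [brsk (i v) (s x₁)] at key
    simp only [map_neg, LinearMap.neg_apply] at key
    rw [trsk (i v) (A.br (s x₁) (s x₂)) (s x₃)]
    linear_combination (norm := module) -key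
  -- rep identity 2
  · intro x₁ x₂ y v
    apply hinj
    simp only [map_sub, map_add, hμ, hθ, hD]
    obtain ⟨c, hc⟩ := hstr x₁ x₂ y
    rw [hc]
    simp only [map_add, LinearMap.add_apply, hab_br, add_zero]
    linear_combination (norm := module) A.ax3 (s x₁) (s x₂) (s y) (i v)
  -- rep identity 3
  · intro x y₁ y₂ v
    apply hinj
    simp only [map_sub, map_add, hμ, hθ, hD]
    obtain ⟨c, hc⟩ := hsbr y₁ y₂
    rw [hc]
    simp only [map_add, LinearMap.add_apply, hab_tr3, add_zero]
    have key := A.ax3 (i v) (s x) (s y₁) (s y₂)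
    rw [brsk (A.tr (i v) (s x) (s y₁)) (s y₂)] at key
    linear_combination (norm := module) key
  -- rep identity 4
  · intro x₁ x₂ y₁ y₂ v
    apply hinj
    simp only [map_sub, map_add, hμ, hθ, hD]
    obtain ⟨c, hc⟩ := hstr x₁ x₂ y₁
    obtain ⟨d, hd⟩ := hstr x₁ x₂ y₂
    rw [hc, hd]
    simp only [map_add, LinearMap.add_apply, hab_tr1, hab_tr3, add_zero]
    linear_combination (norm := module) A.ax4 (s x₁) (s x₂) (i v) (s y₁) (s y₂)
  -- rep identity 5
  · intro x y₁ y₂ y₃ v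
    apply hinj
    simp only [map_sub, map_add, hμ, hθ, hD]
    obtain ⟨c, hc⟩ := hstr y₁ y₂ y₃
    rw [hc]
    simp only [map_add, LinearMap.add_apply, hab_tr3, add_zero]
    have key := A.ax4 (i v) (s x) (s y₁) (s y₂) (s y₃)
    rw [trsk (s y₁) (A.tr (i v) (s x) (s y₂)) (s y₃)] at key
    linear_combination (norm := module) key
  -- rep identity 6
  · intro x₁ x₂ v
    apply hinj
    simp only [map_sub, map_add, map_zero, hμ, hθ, hD]
    obtain ⟨c, hc⟩ := hsbr x₁ x₂
    rw [hc]
    simp only [map_add, LinearMap.add_apply, hab_br, add_zero]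
    have key := A.ax1 (s x₁) (s x₂) (i v)
    rw [brsk (A.br (s x₂) (i v)) (s x₁), brsk (i v) (s x₁)] at key
    simp only [map_neg, LinearMap.neg_apply] at key
    rw [brsk (A.br (s x₁) (i v)) (s x₂), trsk (s x₂) (i v) (s x₁)] at key
    linear_combination (norm := module) key
end

section
/- Let $\mathcal E: 0 \to \mathfrak h \to \hat{\mathfrak g} \xrightarrow{p} \mathfrak g \to 0$ be an abelian extension of Lie-Yamaguti algebras with section $s$, induced representation $(\mathfrak h, \mu, \theta, D)$, and induced (2,3)-cocycle $(\chi,\omega)$ where $\chi(x,y) = [s(x),s(y)] - s([x,y])$ and $\omega(x,y,z) = \{s(x),s(y),s(z)\} - s(\{x,y,z\})$. Then a pair $(\alpha,\beta) \in \mathrm{Aut}(\mathfrak g) \times \mathrm{Aut}(\mathfrak h)$ is extensible with respect to $\mathcal E$ (i.e. there exists $\gamma \in \mathrm{Aut}(\hat{\mathfrak g})$ with $\gamma|_{\mathfrak h} = \beta$ and $p\gamma = \alpha p$) if and only if there exists a linear map $\varphi: \mathfrak g \to \mathfrak h$ such that: (1) $\beta\omega(x,y,z) - \omega(\alpha x,\alpha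 y,\alpha z) = \theta(\alpha x,\alpha z)\varphi(y) - \theta(\alpha y,\alpha z)\varphi(x) - D(\alpha x,\alpha y)\varphi(z) + \varphi(\{x,y,z\})$; (2) $\beta\chi(x,y) - \chi(\alpha x,\alpha y) = \mu(\alpha y)\varphi(x) - \mu(\alpha x)\varphi(y) + \varphi([x,y])$; (3) $\beta\theta(x,y)a = \theta(\alpha x,\alpha y)\beta a$ and $\beta\mu(x)a = \mu(\alpha x)\beta a$ for all $x,y,z \in \mathfrak g$, $a \in \mathfrak h$. -/
theorem stmt17
    {k g h gh : Type*} [Field k]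
    [AddCommGroup g] [Module k g] [AddCommGroup h] [Module k h]
    [AddCommGroup gh] [Module k gh]
    (G : LYStruct k g) (H : LYStruct k h) (A : LYStruct k gh)
    (i : h →ₗ[k] gh) (p : gh →ₗ[k] g)
    (hi_br : ∀ a b, i (H.br a b) = A.br (i a) (i b))
    (hi_tr : ∀ a b c, i (H.tr a b c) = A.tr (i a) (i b) (i c))
    (hp_br : ∀ u v, p (A.br u v) = G.br (p u) (p v))
    (hp_tr : ∀ u v w, p (A.tr u v w) = G.tr (p u) (p v) (p w))
    (hinj : Function.Injective i) (hsurj : Function.Surjective p)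
    (hexact : LinearMap.range i = LinearMap.ker p)
    -- 𝔥 is an abelian ideal of ĝ
    (hab_br : ∀ a b, A.br (i a) (i b) = 0)
    (hab_tr1 : ∀ (a b : h) (w : gh), A.tr (i a) (i b) w = 0)
    (hab_tr2 : ∀ (a b : h) (w : gh), A.tr w (i a) (i b) = 0)
    (hab_tr3 : ∀ (a b : h) (w : gh), A.tr (i a) w (i b) = 0)
    (s : g →ₗ[k] gh) (hs : ∀ x, p (s x) = x)
    (μh : g →ₗ[k] h →ₗ[k] h) (θh Dh : g →ₗ[k] g →ₗ[k] h →ₗ[k] h)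
    (hμ : ∀ x a, i (μh x a) = A.br (s x) (i a))
    (hθ : ∀ x y a, i (θh x y a) = A.tr (i a) (s x) (s y))
    (hD : ∀ x y a, i (Dh x y a) = A.tr (s x) (s y) (i a))
    (χh : g → g → h) (ωh : g → g → g → h)
    (hχ : ∀ x y, i (χh x y) = A.br (s x) (s y) - s (G.br x y))
    (hω : ∀ x y z, i (ωh x y z) = A.tr (s x) (s y) (s z) - s (G.tr x y z))
    (α : g →ₗ[k] g) (hα : Function.Bijective α)
    (hαbr : ∀ x y, α (G.br x y) = G.br (α x) (α y))
    (hαtr : ∀ x y z, α (G.tr x y z) = G.tr (α x) (α y) (α z))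
    (β : h →ₗ[k] h) (hβ : Function.Bijective β)
    (hβbr : ∀ a b, β (H.br a b) = H.br (β a) (β b))
    (hβtr : ∀ a b c, β (H.tr a b c) = H.tr (β a) (β b) (β c)) :
    -- (α, β) is extensible
    (∃ γ : gh →ₗ[k] gh, Function.Bijective γ ∧
        (∀ u v, γ (A.br u v) = A.br (γ u) (γ v)) ∧
        (∀ u v w, γ (A.tr u v w) = A.tr (γ u) (γ v) (γ w)) ∧
        (∀ a, γ (i a) = i (β a)) ∧
        (∀ w, p (γ w) = α (p w)))
    ↔
    -- iff there is a linear map φ satisfying (1)-(3)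
    (∃ φ : g →ₗ[k] h,
      (∀ x y z,
        β (ωh x y z) - ωh (α x) (α y) (α z) =
          θh (α x) (α z) (φ y) - θh (α y) (α z) (φ x)
            - Dh (α x) (α y) (φ z) + φ (G.tr x y z)) ∧
      (∀ x y,
        β (χh x y) - χh (α x) (α y) =
          μh (α y) (φ x) - μh (α x) (φ y) + φ (G.br x y)) ∧
      (∀ x y a, β (θh x y a) = θh (α x) (α y) (β a)) ∧
      (∀ x a, β (μh x a) = μh (α x) (β a))) := by
  classical
  -- basic facts
  have hpi : ∀ a, p (i a) = 0 := by
    intro a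
    have : i a ∈ LinearMap.ker p := hexact ▸ LinearMap.mem_range_self i a
    exact this
  have brsk : ∀ u v, A.br u v = - A.br v u := by
    intro u v
    have := A.br_skew u v
    linear_combination (norm := abel) this
  have trsk : ∀ u v w, A.tr u v w = - A.tr v u w := by
    intro u v w
    have := A.tr_skew u v w
    linear_combination (norm := abel) this
  -- the retraction r with i (r w) = w - s (p w)
  obtain ⟨r, hir⟩ : ∃ r : gh →ₗ[k] h, ∀ w, i (r w) = w - s (p w) := by
    have hq : ∀ w, ((LinearMap.id : gh →ₗ[k] gh) - s ∘ₗ p) w ∈ LinearMap.range i := by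
      intro w
      rw [hexact]
      simp [LinearMap.mem_ker, map_sub, hs]
    refine ⟨(LinearEquiv.ofInjective i hinj).symm.toLinearMap ∘ₗ
      LinearMap.codRestrict (LinearMap.range i) ((LinearMap.id : gh →ₗ[k] gh) - s ∘ₗ p) hq, fun w => ?_⟩
    have h1 : ∀ x : LinearMap.range i,
        i ((LinearEquiv.ofInjective i hinj).symm x) = (x : gh) := by
      intro x
      conv_rhs => rw [← (LinearEquiv.ofInjective i hinj).apply_symm_apply x]
      rw [LinearEquiv.ofInjective_apply]
    simp only [LinearMap.comp_apply, LinearEquiv.coe_coe, h1,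
      LinearMap.codRestrict_apply, LinearMap.sub_apply, LinearMap.id_apply]
  have hri : ∀ a, r (i a) = a := by
    intro a
    apply hinj
    rw [hir, hpi, map_zero, sub_zero]
  have hrs : ∀ x, r (s x) = 0 := by
    intro x
    apply hinj
    rw [hir, hs, map_zero, sub_self]
  -- normalization lemmas
  have Eχ : ∀ x y, A.br (s x) (s y) = i (χh x y) + s (G.br x y) := by
    intro x y; rw [hχ]; abel
  have Eω : ∀ x y z, A.tr (s x) (s y) (s z) = i (ωh x y z) + s (G.tr x y z) := by
    intro x y z; rw [hω]; abel
  have hbr_si : ∀ x b, A.br (s x) (i b) = i (μh x b) := fun x b => (hμ x b).symm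
  have hbr_is : ∀ a y, A.br (i a) (s y) = - i (μh y a) := by
    intro a y; rw [brsk, hbr_si]
  have htr_iss : ∀ a x y, A.tr (i a) (s x) (s y) = i (θh x y a) :=
    fun a x y => (hθ x y a).symm
  have htr_sis : ∀ x a y, A.tr (s x) (i a) (s y) = - i (θh x y a) := by
    intro x a y; rw [trsk, htr_iss]
  have htr_ssi : ∀ x y a, A.tr (s x) (s y) (i a) = i (Dh x y a) :=
    fun x y a => (hD x y a).symm
  -- the "sixth axiom": Dh in terms of θh and μh
  have hDform : ∀ x y a, Dh x y a =
      θh y x a - θh x y a - μh (G.br x y) a + μh x (μh y a) - μh y (μh x a) := by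
    intro x y a
    have AX := A.ax1 (s x) (s y) (i a)
    simp only [Eχ, hbr_si, hbr_is, htr_iss, htr_sis, htr_ssi, hab_br,
      map_add, map_neg, map_sub, LinearMap.add_apply, LinearMap.neg_apply,
      LinearMap.sub_apply, zero_add, add_zero] at AX
    apply hinj
    simp only [map_sub, map_add]
    linear_combination (norm := abel) AX
  constructor
  · rintro ⟨γ, hγbij, hγbr, hγtr, hγi, hγp⟩
    refine ⟨-(r ∘ₗ γ ∘ₗ s), ?_, ?_, ?_, ?_⟩
    all_goals
      have hgs : ∀ x, γ (s x) = s (α x) - i ((-(r ∘ₗ γ ∘ₗ s)) x) := by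
        intro x
        simp only [LinearMap.neg_apply, LinearMap.comp_apply, map_neg, sub_neg_eq_add]
        rw [hir, hγp, hs]
        abel
    · -- condition (1)
      intro x y z
      set φ := -(r ∘ₗ γ ∘ₗ s) with hφ
      apply hinj
      have e1 : i (β (ωh x y z)) =
          A.tr (γ (s x)) (γ (s y)) (γ (s z))
            - (s (α (G.tr x y z)) - i (φ (G.tr x y z))) := by
        rw [← hγi, hω, map_sub, hγtr]
        simp only [hgs]
      rw [map_sub, e1]
      simp only [hgs, map_sub, map_add, LinearMap.sub_apply, LinearMap.add_apply,
        Eω, htr_iss, htr_sis, htr_ssi, hab_tr1, hab_tr2, hab_tr3, hαtr,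
        map_neg, LinearMap.neg_apply, sub_zero, zero_sub, add_zero, zero_add]
      abel
    · -- condition (2)
      intro x y
      set φ := -(r ∘ₗ γ ∘ₗ s) with hφ
      apply hinj
      have e2 : i (β (χh x y)) =
          A.br (γ (s x)) (γ (s y)) - (s (α (G.br x y)) - i (φ (G.br x y))) := by
        rw [← hγi, hχ, map_sub, hγbr]
        simp only [hgs]
      rw [map_sub, e2]
      simp only [hgs, map_sub, map_add, LinearMap.sub_apply, LinearMap.add_apply,
        Eχ, hbr_si, hbr_is, hab_br, hαbr,
        map_neg, LinearMap.neg_apply, sub_zero, zero_sub, add_zero, zero_add]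
      abel
    · -- condition (3): θ-equivariance
      intro x y a
      apply hinj
      have e3 : i (β (θh x y a)) = A.tr (i (β a)) (γ (s x)) (γ (s y)) := by
        rw [← hγi, hθ, hγtr, hγi]
      rw [e3]
      simp only [hgs, map_sub, LinearMap.sub_apply,
        htr_iss, hab_tr1, hab_tr3, sub_zero, zero_sub, add_zero, zero_add]
    · -- condition (3): μ-equivariance
      intro x a
      apply hinj
      have e4 : i (β (μh x a)) = A.br (γ (s x)) (i (β a)) := by
        rw [← hγi, hμ, hγbr, hγi]
      rw [e4]
      simp only [hgs, map_sub, LinearMap.sub_apply, hbr_si, hab_br, sub_zero]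
  · rintro ⟨φ, h1, h2, h3, h4⟩
    -- rearranged versions of (1) and (2)
    have h1' : ∀ x y z, β (ωh x y z) =
        (θh (α x) (α z) (φ y) - θh (α y) (α z) (φ x)
          - Dh (α x) (α y) (φ z) + φ (G.tr x y z)) + ωh (α x) (α y) (α z) :=
      fun x y z => sub_eq_iff_eq_add.mp (h1 x y z)
    have h2' : ∀ x y, β (χh x y) =
        (μh (α y) (φ x) - μh (α x) (φ y) + φ (G.br x y)) + χh (α x) (α y) :=
      fun x y => sub_eq_iff_eq_add.mp (h2 x y)
    -- D-equivariance
    have hDβ : ∀ x y a, β (Dh x y a) = Dh (α x) (α y) (β a) := by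
      intro x y a
      rw [hDform x y a, hDform (α x) (α y) (β a)]
      simp only [map_sub, map_add, h3, h4, hαbr]
    set γ : gh →ₗ[k] gh := s ∘ₗ α ∘ₗ p + i ∘ₗ β ∘ₗ r - i ∘ₗ φ ∘ₗ p with hγdef
    have hγw : ∀ w, γ w = s (α (p w)) + i (β (r w)) - i (φ (p w)) := by
      intro w
      simp [hγdef, LinearMap.sub_apply, LinearMap.add_apply, LinearMap.comp_apply]
    have hγi2 : ∀ a, γ (i a) = i (β a) := by
      intro a
      rw [hγw, hpi, hri]
      simp
    have hγs : ∀ x, γ (s x) = s (α x) - i (φ x) := by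
      intro x
      rw [hγw, hs, hrs]
      simp
    have hγp2 : ∀ w, p (γ w) = α (p w) := by
      intro w
      rw [hγw, map_sub, map_add, hpi, hpi, hs]
      abel
    have hdecomp : ∀ w, w = s (p w) + i (r w) := by
      intro w
      rw [hir]
      abel
    refine ⟨γ, ⟨?_, ?_⟩, ?_, ?_, hγi2, hγp2⟩
    · -- injective
      have hker : ∀ w, γ w = 0 → w = 0 := by
        intro w hw
        have hp0 : p w = 0 := by
          have := hγp2 w
          rw [hw, map_zero] at this
          exact hα.1 (by rw [← this, map_zero])
        have hw2 : w = i (r w) := by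
          conv_lhs => rw [hdecomp w]
          rw [hp0, map_zero, zero_add]
        rw [hw2, hγi2] at hw
        have : β (r w) = 0 := hinj (by rw [hw, map_zero])
        have : r w = 0 := hβ.1 (by rw [this, map_zero])
        rw [hw2, this, map_zero]
      intro u v huv
      have := hker (u - v) (by rw [map_sub, huv, sub_self])
      exact sub_eq_zero.mp this
    · -- surjective
      intro v
      obtain ⟨x, hx⟩ := hα.2 (p v)
      obtain ⟨b, hb⟩ := hβ.2 (r (v - γ (s x)))
      refine ⟨s x + i b, ?_⟩
      rw [map_add, hγi2, hb, hir, map_sub, hγp2, hs, hx, sub_self, map_zero]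
      abel
    · -- bracket morphism
      have main : ∀ x y a b, γ (A.br (s x + i a) (s y + i b))
          = A.br (γ (s x + i a)) (γ (s y + i b)) := by
        intro x y a b
        simp only [map_add, hγs, hγi2, LinearMap.add_apply, map_sub,
          LinearMap.sub_apply, Eχ, hbr_si, hbr_is, hab_br, map_neg,
          LinearMap.neg_apply, add_zero, zero_add, h2', h4, hαbr]
        abel
      intro u v
      rw [show u = s (p u) + i (r u) from hdecomp u,
        show v = s (p v) + i (r v) from hdecomp v]
      exact main _ _ _ _
    · -- triple bracket morphism
      have main : ∀ x y z a b c, γ (A.tr (s x + i a) (s y + i b) (s z + i c))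
          = A.tr (γ (s x + i a)) (γ (s y + i b)) (γ (s z + i c)) := by
        intro x y z a b c
        simp only [map_add, hγs, hγi2, LinearMap.add_apply, map_sub,
          LinearMap.sub_apply, Eω, htr_iss, htr_sis, htr_ssi,
          hab_tr1, hab_tr2, hab_tr3, map_neg, LinearMap.neg_apply,
          add_zero, zero_add, sub_zero, h1', h3, h4, hDβ, hαtr]
        abel
      intro u v w
      rw [show u = s (p u) + i (r u) from hdecomp u,
        show v = s (p v) + i (r v) from hdecomp v,
        show w = s (p w) + i (r w) from hdecomp w]
      exact main _ _ _ _ _ _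
end
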